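/- Let r and s be positive integers and let 1 ≤ n ≤ c. With R = S·γ_{n+1}(F), the following hold: (i) R ∩ γ_{c+1}(F) = γ_{c+1}(F); (ii) [R, F, …, F] (c copies of F) = γ_{c+n+1}(F)·ρ_{c+1}(S). Consequently the Baer-invariant N_cM(G_{(r,s,n)}) = (R ∩ γ_{c+1}(F)) / [R, F, …, F] is isomorphic to γ_{c+1}(F) / (γ_{c+n+1}(F)·ρ_{c+1}(S)). -/

import Mathlib

/-- `F`, the free group on two generators. -/
local notation "F" => FreeGroup (Fin 2)

/-- The generator `x` of the free group `F`. -/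
def x : F := FreeGroup.of 0

/-- The generator `y` of the free group `F`. -/
def y : F := FreeGroup.of 1

open scoped commutatorElement

/-- Left-normed commutator `[g, l₁, l₂, …, lₖ]`. -/
def lnc (g : F) (l : List F) : F := l.foldl (fun p q => ⁅p, q⁆) g

/-- `rho H k = [H, F, …, F]` (`k` copies of `F`); so `rho H (k-1) = ρ_k(H)`. -/
def rho (H : Subgroup F) : ℕ → Subgroup F
  | 0 => H
  | k + 1 => ⁅rho H k, (⊤ : Subgroup F)⁆

instance rho_normal (H : Subgroup F) [hH : H.Normal] (k : ℕ) : (rho H k).Normal := by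
  induction k with
  | zero => exact hH
  | succ k ih => haveI := ih; exact Subgroup.commutator_normal _ _

/-- Witt's formula: the number of basic commutators of weight `m` on two letters. -/
def witt2 (m : ℕ) : ℕ :=
  ((∑ e ∈ m.divisors, ArithmeticFunction.moebius e * (2 : ℤ) ^ (m / e)) / (m : ℤ)).toNat

/-!
Since `n ≤ c`, `γ_{c+1}(F) ≤ γ_{n+1}(F) ≤ R`, which is (i). For (ii), taking commutators with a
normal subgroup distributes over joins of normal subgroups, so `ρ_{c+1}(S·γ_{n+1}(F))` splits as
`ρ_{c+1}(S)·ρ_{c+1}(γ_{n+1}(F))`, and the second factor is `γ_{c+n+1}(F)`. The isomorphism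
follows by rewriting with (i) and (ii).
-/

open scoped Pointwise in
theorem Subgroup.commutator_sup_left {G : Type*} [Group G] (H K L : Subgroup G)
    [H.Normal] [K.Normal] [L.Normal] : ⁅H ⊔ K, L⁆ = ⁅H, L⁆ ⊔ ⁅K, L⁆ := by
  refine le_antisymm ?_ (sup_le (Subgroup.commutator_mono le_sup_left le_rfl)
    (Subgroup.commutator_mono le_sup_right le_rfl))
  rw [Subgroup.commutator_le]
  intro a ha g hg
  obtain ⟨h, hh, k, hk, rfl⟩ : a ∈ (H : Set G) * (K : Set G) := by
    rwa [← Subgroup.mul_normal]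
  have hhg : ⁅h, g⁆ ∈ ⁅H, L⁆ ⊔ ⁅K, L⁆ :=
    Subgroup.mem_sup_left (Subgroup.commutator_mem_commutator hh hg)
  have hkg : ⁅k, g⁆ ∈ ⁅H, L⁆ ⊔ ⁅K, L⁆ :=
    Subgroup.mem_sup_right (Subgroup.commutator_mem_commutator hk hg)
  have hexpand : ⁅h * k, g⁆ = h * ⁅k, g⁆ * h⁻¹ * ⁅h, g⁆ := by
    simp only [commutatorElement_def]; group
  rw [hexpand]
  exact mul_mem ((inferInstance : (⁅H, L⁆ ⊔ ⁅K, L⁆).Normal).conj_mem _ hkg h) hhg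

theorem rho_sup (H K : Subgroup F) [H.Normal] [K.Normal] (k : ℕ) :
    rho (H ⊔ K) k = rho H k ⊔ rho K k := by
  induction k with
  | zero => rfl
  | succ k ih => exact (congrArg (⁅·, ⊤⁆) ih).trans (Subgroup.commutator_sup_left _ _ _)

theorem rho_lowerCentralSeries (m k : ℕ) :
    rho ((⊤ : Subgroup F).lowerCentralSeries m) k = (⊤ : Subgroup F).lowerCentralSeries (m + k) := by
  induction k with
  | zero => rfl
  | succ k ih => exact congrArg (⁅·, ⊤⁆) ih

theorem baer_invariant_reduction_general (r s : ℕ)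
    (n c : ℕ) (hnc : n ≤ c) :
    (Subgroup.normalClosure {x ^ r, y ^ s} ⊔ (⊤ : Subgroup F).lowerCentralSeries n) ⊓
        (⊤ : Subgroup F).lowerCentralSeries c =
      (⊤ : Subgroup F).lowerCentralSeries c ∧
    rho (Subgroup.normalClosure {x ^ r, y ^ s} ⊔ (⊤ : Subgroup F).lowerCentralSeries n) c =
      (⊤ : Subgroup F).lowerCentralSeries (c + n) ⊔ rho (Subgroup.normalClosure {x ^ r, y ^ s}) c ∧
    Nonempty
      ((↥((Subgroup.normalClosure {x ^ r, y ^ s} ⊔ (⊤ : Subgroup F).lowerCentralSeries n) ⊓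
            (⊤ : Subgroup F).lowerCentralSeries c) ⧸
          ((rho (Subgroup.normalClosure {x ^ r, y ^ s} ⊔ (⊤ : Subgroup F).lowerCentralSeries n) c).subgroupOf
            ((Subgroup.normalClosure {x ^ r, y ^ s} ⊔ (⊤ : Subgroup F).lowerCentralSeries n) ⊓
              (⊤ : Subgroup F).lowerCentralSeries c))) ≃*
        (↥((⊤ : Subgroup F).lowerCentralSeries c) ⧸
          (((⊤ : Subgroup F).lowerCentralSeries (c + n) ⊔
              rho (Subgroup.normalClosure {x ^ r, y ^ s}) c).subgroupOf
            ((⊤ : Subgroup F).lowerCentralSeries c)))) := by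
  have hinf : (Subgroup.normalClosure {x ^ r, y ^ s} ⊔ (⊤ : Subgroup F).lowerCentralSeries n) ⊓
      (⊤ : Subgroup F).lowerCentralSeries c = (⊤ : Subgroup F).lowerCentralSeries c :=
    inf_eq_right.mpr ((Subgroup.lowerCentralSeries_antitone _ hnc).trans le_sup_right)
  have hrho : rho (Subgroup.normalClosure {x ^ r, y ^ s} ⊔ (⊤ : Subgroup F).lowerCentralSeries n) c =
      (⊤ : Subgroup F).lowerCentralSeries (c + n) ⊔ rho (Subgroup.normalClosure {x ^ r, y ^ s}) c := by
    rw [rho_sup, rho_lowerCentralSeries, Nat.add_comm n c, sup_comm]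
  refine ⟨hinf, hrho, ?_⟩
  rw [hinf]
  exact ⟨QuotientGroup.quotientMulEquivOfEq (by rw [hrho])⟩

/-- For positive integers `r, s` and `1 ≤ n ≤ c`, with `S` the normal closure of `{xʳ, yˢ}`
in `F` and `R = S·γ_{n+1}(F)`: (i) `R ∩ γ_{c+1}(F) = γ_{c+1}(F)`;
(ii) `[R, F, …, F]` (`c` copies of `F`) `= γ_{c+n+1}(F)·ρ_{c+1}(S)`; consequently
(iii) the Baer-invariant `𝒩_c M(G_{(r,s,n)}) = (R ∩ γ_{c+1}(F)) / [R, F, …, F]` is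
isomorphic to `γ_{c+1}(F) / (γ_{c+n+1}(F)·ρ_{c+1}(S))`. -/
theorem baer_invariant_reduction (r s : ℕ) (hr : 0 < r) (hs : 0 < s)
    (n c : ℕ) (hn : 1 ≤ n) (hnc : n ≤ c) :
    (Subgroup.normalClosure {x ^ r, y ^ s} ⊔ (⊤ : Subgroup F).lowerCentralSeries n) ⊓
        (⊤ : Subgroup F).lowerCentralSeries c =
      (⊤ : Subgroup F).lowerCentralSeries c ∧
    rho (Subgroup.normalClosure {x ^ r, y ^ s} ⊔ (⊤ : Subgroup F).lowerCentralSeries n) c =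
      (⊤ : Subgroup F).lowerCentralSeries (c + n) ⊔ rho (Subgroup.normalClosure {x ^ r, y ^ s}) c ∧
    Nonempty
      ((↥((Subgroup.normalClosure {x ^ r, y ^ s} ⊔ (⊤ : Subgroup F).lowerCentralSeries n) ⊓
            (⊤ : Subgroup F).lowerCentralSeries c) ⧸
          ((rho (Subgroup.normalClosure {x ^ r, y ^ s} ⊔ (⊤ : Subgroup F).lowerCentralSeries n) c).subgroupOf
            ((Subgroup.normalClosure {x ^ r, y ^ s} ⊔ (⊤ : Subgroup F).lowerCentralSeries n) ⊓
              (⊤ : Subgroup F).lowerCentralSeries c))) ≃*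
        (↥((⊤ : Subgroup F).lowerCentralSeries c) ⧸
          (((⊤ : Subgroup F).lowerCentralSeries (c + n) ⊔
              rho (Subgroup.normalClosure {x ^ r, y ^ s}) c).subgroupOf
            ((⊤ : Subgroup F).lowerCentralSeries c)))) :=
  baer_invariant_reduction_general r s n c hnc
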